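/- arXiv:1001.0248 — 2 statements merged into one kernel-verified Lean document; each statement's English description precedes it below -/
import Mathlib

section
/- Catalan's constant K = ∑_{n=0}^∞ (-1)^n/(2n+1)² equals ∫_0^{π/2} log(2 cos(t/2)) dt. -/
/-! For `|r| < 1`, taking real parts in the Taylor series of `log (1 + z)` at `z = r e^{it}` gives
`log ‖1 + r e^{it}‖ = ∑ (-1)^(n+1) rⁿ cos (n t) / n`. Integrating termwise over `[0, π/2]` kills the
even terms and leaves `∑ (-1)^k r^(2k+1) / (2k+1)²`. Now let `r → 1⁻`: on the series side by
dominated convergence, on the integral side too, since for `0 ≤ r ≤ 1` and `cos t ≥ 0` the integrand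
lies in `[0, log 2]`. Finally `‖1 + e^{it}‖ = 2 cos (t/2)`. -/

open Real MeasureTheory Filter Set Topology Interval

lemma HasSum.comp_two_mul_add_one {M : Type*} [AddCommMonoid M] [TopologicalSpace M] {f : ℕ → M}
    {a : M} (h : HasSum f a) (hf : ∀ k, f (2 * k) = 0) : HasSum (fun k ↦ f (2 * k + 1)) a := by
  refine (Function.Injective.hasSum_iff (fun _ _ h ↦ by omega) fun n hn ↦ ?_).2 h
  obtain ⟨k, rfl | rfl⟩ := Nat.even_or_odd' n
  · exact hf k
  · exact absurd ⟨k, rfl⟩ hn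

lemma integral_div_mul_cos_nat_mul (c b : ℝ) (n : ℕ) :
    ∫ t in 0..b, c / n * Real.cos (n * t) = c / n ^ 2 * Real.sin (n * b) := by
  have h : n * ∫ t in 0..b, Real.cos (n * t) = Real.sin (n * b) := by
    rw [intervalIntegral.mul_integral_comp_mul_left, mul_zero, integral_cos, sin_zero, sub_zero]
  rw [intervalIntegral.integral_const_mul, ← h]
  rcases eq_or_ne (n : ℝ) 0 with hn | hn
  · simp [hn]
  · field_simp

lemma Real.sin_two_mul_add_one_mul_pi_div_two (k : ℕ) :
    Real.sin ((2 * k + 1) * (π / 2)) = (-1) ^ k := by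
  rw [show (2 * k + 1) * (π / 2) = π / 2 + k * π by ring, sin_add_nat_mul_pi, sin_pi_div_two,
    mul_one]

lemma tendsto_tsum_mul_pow_nhdsLT_one {a : ℕ → ℝ} (ha : Summable fun k ↦ ‖a k‖) (e : ℕ → ℕ) :
    Tendsto (fun r : ℝ ↦ ∑' k, a k * r ^ e k) (𝓝[<] 1) (𝓝 (∑' k, a k)) := by
  refine tendsto_tsum_of_dominated_convergence ha (fun k ↦ ?_) ?_
  · simpa using (((continuous_pow (e k)).const_mul (a k)).tendsto 1).mono_left nhdsWithin_le_nhds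
  · filter_upwards [Ioo_mem_nhdsLT zero_lt_one] with r hr k
    rw [norm_mul, norm_pow, Real.norm_of_nonneg hr.1.le]
    exact mul_le_of_le_one_right (norm_nonneg _) (pow_le_one₀ hr.1.le hr.2.le)

lemma summable_norm_neg_one_pow_div_two_mul_add_one_sq :
    Summable fun k : ℕ ↦ ‖(-1 : ℝ) ^ k / (2 * k + 1) ^ 2‖ := by
  have h := (Real.summable_one_div_nat_pow.2 one_lt_two).comp_injective
    (fun a b (h : 2 * a + 1 = 2 * b + 1) ↦ by omega)
  refine h.congr fun k ↦ ?_
  simp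

namespace Complex

lemma one_add_exp_mul_I (t : ℝ) :
    1 + exp (t * I) = exp ((t / 2 : ℝ) * I) * (2 * Real.cos (t / 2) : ℝ) := by
  push_cast
  rw [two_cos, mul_add, ← exp_add, ← exp_add]
  ring_nf
  rw [exp_zero, add_comm]

lemma norm_one_add_exp_mul_I {t : ℝ} (ht : 0 ≤ Real.cos (t / 2)) :
    ‖1 + exp (t * I)‖ = 2 * Real.cos (t / 2) := by
  rw [one_add_exp_mul_I, norm_mul, norm_exp_ofReal_mul_I, one_mul, norm_real, Real.norm_eq_abs,
    abs_of_nonneg (by positivity)]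

lemma one_le_norm_one_add_ofReal_mul_exp {r t : ℝ} (hr : 0 ≤ r) (ht : 0 ≤ Real.cos t) :
    1 ≤ ‖1 + r * exp (t * I)‖ :=
  calc 1 ≤ 1 + r * Real.cos t := le_add_of_nonneg_right (mul_nonneg hr ht)
    _ = (1 + r * exp (t * I)).re := by simp [exp_ofReal_mul_I_re]
    _ ≤ ‖1 + r * exp (t * I)‖ := re_le_norm _

lemma norm_one_add_ofReal_mul_exp_le (r t : ℝ) : ‖1 + r * exp (t * I)‖ ≤ 1 + |r| := by
  simpa using norm_add_le (1 : ℂ) (r * exp (t * I))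

lemma hasSum_re_taylorSeries_log {z : ℂ} (hz : ‖z‖ < 1) :
    HasSum (fun n : ℕ ↦ ((-1) ^ (n + 1) * z ^ n / n).re) (Real.log ‖1 + z‖) := by
  simpa only [reCLM_apply, log_re] using (hasSum_taylorSeries_log hz).mapL reCLM

lemma hasSum_log_norm_one_add_ofReal_mul_exp {r : ℝ} (hr : |r| < 1) (t : ℝ) :
    HasSum (fun n : ℕ ↦ (-1) ^ (n + 1) * r ^ n / n * Real.cos (n * t))
      (Real.log ‖1 + r * exp (t * I)‖) := by
  have hz : ‖(r : ℂ) * exp (t * I)‖ < 1 := by simpa using hr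
  convert hasSum_re_taylorSeries_log hz using 2 with n
  have : (-1) ^ (n + 1) * (r * exp (t * I)) ^ n / n
      = (((-1) ^ (n + 1) * r ^ n / n : ℝ) : ℂ) * exp ((n * t : ℝ) * I) := by
    rw [mul_pow, ← exp_nat_mul]
    push_cast
    ring_nf
  rw [this, re_ofReal_mul, exp_ofReal_mul_I_re]

lemma hasSum_integral_log_norm_one_add_ofReal_mul_exp {r : ℝ} (hr : |r| < 1) :
    HasSum (fun k : ℕ ↦ (-1) ^ k / (2 * k + 1) ^ 2 * r ^ (2 * k + 1))
      (∫ t in 0..π / 2, Real.log ‖1 + r * exp (t * I)‖) := by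
  have hbound (n : ℕ) (t : ℝ) : ‖(-1) ^ (n + 1) * r ^ n / n * Real.cos (n * t)‖ ≤ |r| ^ n := by
    simp only [norm_mul, norm_div, norm_pow, norm_neg, norm_one, one_pow, one_mul,
      Real.norm_eq_abs, Nat.abs_cast]
    exact (mul_le_of_le_one_right (by positivity) (abs_cos_le_one _)).trans
      (div_nat_le_self_of_nonnneg (by positivity) n)
  have hterms : HasSum (fun n : ℕ ↦ ∫ t in 0..π / 2, (-1) ^ (n + 1) * r ^ n / n * Real.cos (n * t))
      (∫ t in 0..π / 2, Real.log ‖1 + r * exp (t * I)‖) :=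
    intervalIntegral.hasSum_integral_of_dominated_convergence (fun n _ ↦ |r| ^ n)
      (fun n ↦ (by fun_prop : Continuous _).aestronglyMeasurable)
      (fun n ↦ ae_of_all _ fun t _ ↦ hbound n t)
      (ae_of_all _ fun _ _ ↦ summable_geometric_of_lt_one (abs_nonneg r) hr)
      intervalIntegrable_const
      (ae_of_all _ fun t _ ↦ hasSum_log_norm_one_add_ofReal_mul_exp hr t)
  simp only [integral_div_mul_cos_nat_mul] at hterms
  convert hterms.comp_two_mul_add_one fun k ↦ ?_ using 2 with k
  · rw [Even.neg_one_pow (n := 2 * k + 1 + 1) ⟨k + 1, by ring⟩]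
    push_cast
    rw [sin_two_mul_add_one_mul_pi_div_two]
    ring
  · push_cast
    rw [show 2 * (k : ℝ) * (π / 2) = k * π by ring, Real.sin_nat_mul_pi, mul_zero]

lemma tendsto_integral_log_norm_one_add_ofReal_mul_exp :
    Tendsto (fun r : ℝ ↦ ∫ t in 0..π / 2, Real.log ‖1 + r * exp (t * I)‖) (𝓝[<] 1)
      (𝓝 (∫ t in 0..π / 2, Real.log (2 * Real.cos (t / 2)))) := by
  have hcos {t : ℝ} (ht : t ∈ Ι 0 (π / 2)) : 0 ≤ Real.cos t ∧ 0 < Real.cos (t / 2) := by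
    rw [uIoc_of_le pi_div_two_pos.le] at ht
    exact ⟨cos_nonneg_of_mem_Icc ⟨by linarith [ht.1, pi_pos], ht.2⟩,
      cos_pos_of_mem_Ioo ⟨by linarith [ht.1, pi_pos], by linarith [ht.2, pi_pos]⟩⟩
  refine intervalIntegral.tendsto_integral_filter_of_dominated_convergence (fun _ ↦ Real.log 2)
    (.of_forall fun r ↦ (by fun_prop : Continuous fun t : ℝ ↦ ‖1 + r * exp (t * I)‖).measurable.log
      |>.aestronglyMeasurable) ?_ intervalIntegrable_const (ae_of_all _ fun t ht ↦ ?_)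
  · filter_upwards [Ioo_mem_nhdsLT zero_lt_one] with r hr
    refine ae_of_all _ fun t ht ↦ ?_
    have hlower := one_le_norm_one_add_ofReal_mul_exp hr.1.le (hcos ht).1
    have hupper := norm_one_add_ofReal_mul_exp_le r t
    rw [abs_of_pos hr.1] at hupper
    rw [Real.norm_of_nonneg (Real.log_nonneg hlower)]
    exact Real.log_le_log (by linarith) (by linarith [hr.2])
  · have hne : ‖1 + (1 : ℝ) * exp (t * I)‖ ≠ 0 := by
      rw [ofReal_one, one_mul, norm_one_add_exp_mul_I (hcos ht).2.le]
      linarith [(hcos ht).2]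
    have hcont : ContinuousAt (fun r : ℝ ↦ Real.log ‖1 + r * exp (t * I)‖) 1 :=
      (by fun_prop : Continuous fun r : ℝ ↦ ‖1 + r * exp (t * I)‖).continuousAt.log hne
    simpa [norm_one_add_exp_mul_I (hcos ht).2.le] using hcont.tendsto.mono_left nhdsWithin_le_nhds

end Complex

/-- Catalan's constant K = ∑_{n=0}^∞ (-1)^n/(2n+1)² equals ∫_0^{π/2} log(2 cos(t/2)) dt. -/
theorem catalan_eq_integral_log_two_cos :
    ∑' n : ℕ, (-1 : ℝ) ^ n / (2 * n + 1) ^ 2 =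
      ∫ t in (0 : ℝ)..(Real.pi / 2), Real.log (2 * Real.cos (t / 2)) := by
  have hseries : ∀ᶠ r : ℝ in 𝓝[<] 1, ∑' k : ℕ, (-1) ^ k / (2 * k + 1) ^ 2 * r ^ (2 * k + 1) =
      ∫ t in 0..π / 2, Real.log ‖1 + r * Complex.exp (t * Complex.I)‖ := by
    filter_upwards [Ioo_mem_nhdsLT (neg_lt_self one_pos)] with r hr
    exact (Complex.hasSum_integral_log_norm_one_add_ofReal_mul_exp (abs_lt.2 hr)).tsum_eq
  exact tendsto_nhds_unique
    ((tendsto_tsum_mul_pow_nhdsLT_one summable_norm_neg_one_pow_div_two_mul_add_one_sq _).congr'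
      hseries)
    Complex.tendsto_integral_log_norm_one_add_ofReal_mul_exp
end

section
/- For every real θ with |θ| < π, tan(θ/2)/2 = (1/2) ∑_{n=1}^∞ c_n (θ/2)^{2n-1}, where c_n = B_{2n} (2^{2n} - 1) 2^{2n} (-1)^{n+1} / (2n)! and B_{2n} are the Bernoulli numbers. -/
open Real

/-- The Maclaurin coefficients of tan: c_n = B_{2n}(2^{2n}-1)2^{2n}(-1)^{n+1}/(2n)!. -/
noncomputable def tanCoeff (n : ℕ) : ℝ :=
  (bernoulli (2 * n) : ℝ) * (2 ^ (2 * n) - 1) * 2 ^ (2 * n) * (-1) ^ (n + 1) /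
    (Nat.factorial (2 * n))

/-!
The bound `ζ(2k) ≤ ζ(2) < 2` gives `|Bₙ| ≤ 4 n! / (2π)ⁿ`, so `∑ Bₙ zⁿ / n!` converges absolutely
for `|z| < 2π`; its Cauchy product with `eᶻ - 1` is `z` by the Bernoulli recurrence, hence the sum
is `z / (eᶻ - 1)`. Adding `z / 2` removes the only odd term, and at `z = 2ix` the even part becomes
`x cot x`. Finally `tan x = cot x - 2 cot 2x`.
-/

open Nat Finset

theorem abs_bernoulli_two_mul_le {k : ℕ} (hk : k ≠ 0) :
    |(bernoulli (2 * k) : ℝ)| ≤ 4 * (2 * k)! / (2 * π) ^ (2 * k) := by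
  have hζ := hasSum_zeta_nat hk
  have hζ_le_two : (-1 : ℝ) ^ (k + 1) * 2 ^ (2 * k - 1) * π ^ (2 * k) * bernoulli (2 * k) /
      (2 * k)! ≤ 2 := by
    refine (hasSum_le (fun n => ?_) hζ hasSum_zeta_two).trans (by nlinarith [pi_lt_d2, pi_pos])
    rcases n.eq_zero_or_pos with rfl | hn
    · simp [hk]
    · exact one_div_le_one_div_of_le (by positivity)
        (pow_le_pow_right₀ (by exact_mod_cast hn) (by omega))
  have hζ_eq : (-1 : ℝ) ^ (k + 1) * 2 ^ (2 * k - 1) * π ^ (2 * k) * bernoulli (2 * k) /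
      (2 * k)! = |(bernoulli (2 * k) : ℝ)| * ((2 * π) ^ (2 * k) / 2 / (2 * k)!) := by
    rw [← abs_of_nonneg (hζ.nonneg fun n => by positivity), mul_pow,
      ← pow_sub_one_mul (by omega : 2 * k ≠ 0) (2 : ℝ)]
    simp only [abs_div, abs_mul, abs_pow, abs_neg, abs_one, one_pow, abs_two, one_mul,
      abs_of_pos pi_pos, Nat.abs_cast]
    ring
  rw [hζ_eq] at hζ_le_two
  rw [le_div_iff₀ (by positivity)]
  have : (0 : ℝ) < (2 * k)! := by positivity
  field_simp at hζ_le_two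
  linarith

theorem abs_bernoulli_le (n : ℕ) : |(bernoulli n : ℝ)| ≤ 4 * n ! / (2 * π) ^ n := by
  rcases n.even_or_odd' with ⟨k, rfl | rfl⟩
  · rcases eq_or_ne k 0 with rfl | hk
    · norm_num
    · exact abs_bernoulli_two_mul_le hk
  · rcases eq_or_ne k 0 with rfl | hk
    · rw [le_div_iff₀ (by positivity)]
      norm_num
      linarith [pi_le_four]
    · rw [bernoulli_eq_zero_of_odd (odd_two_mul_add_one k) (by omega)]
      simp only [Rat.cast_zero, abs_zero]
      positivity

theorem summable_norm_bernoulli_mul_pow_div_factorial {z : ℂ} (hz : ‖z‖ < 2 * π) :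
    Summable fun n => ‖(bernoulli n : ℂ) * z ^ n / (n ! : ℂ)‖ := by
  have hr : ‖z‖ / (2 * π) < 1 := (div_lt_one (by positivity)).mpr hz
  refine .of_nonneg_of_le (fun n => norm_nonneg _) (fun n => ?_)
    ((summable_geometric_of_lt_one (by positivity) hr).mul_left 4)
  calc ‖(bernoulli n : ℂ) * z ^ n / (n ! : ℂ)‖ = |(bernoulli n : ℝ)| * ‖z‖ ^ n / n ! := by
        simp [Complex.norm_ratCast]
    _ ≤ 4 * n ! / (2 * π) ^ n * ‖z‖ ^ n / n ! := by gcongr; exact abs_bernoulli_le n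
    _ = 4 * (‖z‖ / (2 * π)) ^ n := by field_simp; rw [div_pow]; field_simp

theorem sum_antidiagonal_bernoulli_div_factorial (k : ℕ) :
    ∑ p ∈ antidiagonal k, (bernoulli p.1 / p.1 ! : ℚ) * (if p.2 = 0 then 0 else (1 / p.2 ! : ℚ)) =
      if k = 1 then 1 else 0 := by
  have := congrArg (PowerSeries.coeff k) (bernoulliPowerSeries_mul_exp_sub_one ℚ)
  rw [PowerSeries.coeff_mul, PowerSeries.coeff_X] at this
  rw [← this]
  refine sum_congr rfl fun p _ => ?_
  split_ifs with h <;> simp [bernoulliPowerSeries, PowerSeries.coeff_exp, PowerSeries.coeff_one, h]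

theorem Complex.exp_ne_one_of_norm_lt {z : ℂ} (hz0 : z ≠ 0) (hz : ‖z‖ < 2 * π) :
    Complex.exp z ≠ 1 := by
  rw [Ne, Complex.exp_eq_one_iff]
  rintro ⟨n, rfl⟩
  have hn : n ≠ 0 := by rintro rfl; simp at hz0
  have : (1 : ℝ) ≤ |(n : ℝ)| := by exact_mod_cast Int.one_le_abs hn
  rw [norm_mul, Complex.norm_intCast, norm_mul, Complex.norm_I, mul_one, Complex.norm_mul,
    Complex.norm_ofNat, Complex.norm_real, norm_of_nonneg pi_pos.le] at hz
  nlinarith [pi_pos]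

theorem hasSum_bernoulli_mul_pow_div_factorial {z : ℂ} (hz0 : z ≠ 0) (hz : ‖z‖ < 2 * π) :
    HasSum (fun n => (bernoulli n : ℂ) * z ^ n / n !) (z / (Complex.exp z - 1)) := by
  set a : ℕ → ℂ := fun n => (bernoulli n : ℂ) * z ^ n / (n ! : ℂ)
  set b : ℕ → ℂ := fun n => z ^ n / (n ! : ℂ) - if n = 0 then 1 else 0
  have ha : Summable (‖a ·‖) := summable_norm_bernoulli_mul_pow_div_factorial hz
  have hb : HasSum b (Complex.exp z - 1) := by
    rw [Complex.exp_eq_exp_ℂ]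
    exact (NormedSpace.expSeries_div_hasSum_exp z).sub (hasSum_ite_eq 0 1)
  have hb_norm : Summable (‖b ·‖) := by
    refine .of_nonneg_of_le (fun n => norm_nonneg _) (fun n => ?_)
      (Real.summable_pow_div_factorial ‖z‖)
    simp only [b]
    split_ifs with h <;> simp [h, norm_pow]
  have hcauchy (k : ℕ) : ∑ p ∈ antidiagonal k, a p.1 * b p.2 = if k = 1 then z else 0 := by
    have hterm : ∀ p ∈ antidiagonal k, a p.1 * b p.2 =
        ((bernoulli p.1 / p.1 ! * (if p.2 = 0 then 0 else (1 / p.2 ! : ℚ)) : ℚ) : ℂ) * z ^ k := by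
      rintro ⟨i, j⟩ hij
      rw [HasAntidiagonal.mem_antidiagonal] at hij
      subst hij
      dsimp only
      split_ifs with h
      · simp [a, b, h]
      · simp only [a, b, h, if_false, sub_zero, pow_add]
        push_cast
        ring
    rw [sum_congr rfl hterm, ← sum_mul, ← Rat.cast_sum, sum_antidiagonal_bernoulli_div_factorial]
    split_ifs with h <;> simp [h]
  have hprod : (∑' n, a n) * (Complex.exp z - 1) = z := by
    rw [← hb.tsum_eq, tsum_mul_tsum_eq_tsum_sum_antidiagonal_of_summable_norm ha hb_norm]
    simp_rw [hcauchy]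
    exact tsum_ite_eq 1 (fun _ => z)
  have hsum : ∑' n, a n = z / (Complex.exp z - 1) := by
    rw [eq_div_iff (sub_ne_zero.mpr (Complex.exp_ne_one_of_norm_lt hz0 hz)), hprod]
  exact hsum ▸ ha.of_norm.hasSum

theorem hasSum_bernoulli_two_mul_mul_pow_div_factorial {z : ℂ} (hz0 : z ≠ 0)
    (hz : ‖z‖ < 2 * π) :
    HasSum (fun n => (bernoulli (2 * n) : ℂ) * z ^ (2 * n) / (2 * n)!)
      (z / (Complex.exp z - 1) + z / 2) := by
  have hodd_vanish : ∀ n ∉ Set.range (2 * ·),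
      (bernoulli n : ℂ) * z ^ n / n ! + (if n = 1 then z / 2 else 0) = 0 := by
    rintro n hn
    have hodd : Odd n := by simpa [← not_even_iff_odd, even_iff_exists_two_mul, eq_comm] using hn
    rcases eq_or_ne n 1 with rfl | hn1
    · rw [if_pos rfl, bernoulli_one]
      push_cast
      ring
    · simp [bernoulli_eq_zero_of_odd hodd (by obtain ⟨k, rfl⟩ := hodd; omega), hn1]
  have := (hasSum_bernoulli_mul_pow_div_factorial hz0 hz).add (hasSum_ite_eq 1 (z / 2))
  rw [← (mul_right_injective₀ two_ne_zero).hasSum_iff hodd_vanish] at this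
  convert this using 2 with n
  simp [show 2 * n ≠ 1 by omega]

theorem Complex.two_mul_I_div_exp_sub_one_add_eq_mul_cot (x : ℂ) (hx : sin x ≠ 0) :
    2 * x * I / (exp (2 * x * I) - 1) + 2 * x * I / 2 = x * cot x := by
  have he : exp (x * I) = cos x + sin x * I := exp_mul_I x
  have hexp : exp (2 * x * I) - 1 = 2 * I * sin x * exp (x * I) := by
    rw [show 2 * x * I = x * I + x * I by ring, exp_add, he]
    linear_combination sin_sq_add_cos_sq x - sin x ^ 2 * I_sq
  rw [hexp, cot_eq_cos_div_sin]
  field_simp [exp_ne_zero]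
  rw [he]
  linear_combination (-x) * sin_sq_add_cos_sq x + x * sin x ^ 2 * I_sq

theorem Real.hasSum_mul_cot {x : ℝ} (hx0 : x ≠ 0) (hx : |x| < π) :
    HasSum (fun n => (bernoulli (2 * n) : ℝ) * (-4) ^ n * x ^ (2 * n) / (2 * n)!) (x * cot x) := by
  have hsin : sin x ≠ 0 := by
    rw [Ne, sin_eq_zero_iff_of_lt_of_lt (abs_lt.mp hx).1 (abs_lt.mp hx).2]
    exact hx0
  have hz : ‖2 * (x : ℂ) * Complex.I‖ < 2 * π := by
    simpa [Complex.norm_real] using hx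
  have := hasSum_bernoulli_two_mul_mul_pow_div_factorial (by simpa using hx0) hz
  rw [Complex.two_mul_I_div_exp_sub_one_add_eq_mul_cot _ (by exact_mod_cast hsin),
    ← Complex.ofReal_cot, ← Complex.ofReal_mul] at this
  refine Complex.hasSum_ofReal.mp (this.congr_fun fun n => ?_)
  push_cast
  simp only [pow_mul, mul_pow, Complex.I_sq]
  rw [neg_pow (4 : ℂ)]
  ring

-- No side conditions: where `sin x` or `cos x` vanishes, both sides are `0` because `a / 0 = 0`.
theorem Real.cot_sub_two_mul_cot_two_mul (x : ℝ) : cot x - 2 * cot (2 * x) = tan x := by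
  rw [cot_eq_cos_div_sin, cot_eq_cos_div_sin, tan_eq_sin_div_cos, sin_two_mul, cos_two_mul]
  by_cases hs : sin x = 0
  · simp [hs]
  by_cases hc : cos x = 0
  · simp [hc]
  field_simp
  linear_combination (-1) * sin_sq_add_cos_sq x

theorem Real.hasSum_tan {t : ℝ} (ht : |t| < π / 2) :
    HasSum (fun n => (bernoulli (2 * (n + 1)) : ℝ) * (-4) ^ (n + 1) * (1 - 4 ^ (n + 1)) *
      t ^ (2 * n + 1) / (2 * (n + 1))!) (tan t) := by
  rcases eq_or_ne t 0 with rfl | ht0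
  · simp
  have hcot := hasSum_mul_cot ht0 (by linarith [abs_nonneg t])
  have hcot₂ := hasSum_mul_cot (x := 2 * t) (by simpa using ht0)
    (by rw [abs_mul, abs_two]; linarith)
  have h := hcot.sub hcot₂
  rw [show t * cot t - 2 * t * cot (2 * t) = t * tan t by
    rw [← cot_sub_two_mul_cot_two_mul]; ring, ← hasSum_nat_add_iff' 1] at h
  rw [← hasSum_mul_left_iff ht0]
  refine (by simpa using h : HasSum _ (t * tan t)).congr_fun fun n => ?_
  rw [mul_pow, pow_mul (2 : ℝ), show 2 * (n + 1) = 2 * n + 1 + 1 by ring, pow_succ t]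
  norm_num
  ring

theorem tanCoeff_eq (n : ℕ) :
    tanCoeff n = (bernoulli (2 * n) : ℝ) * (-4) ^ n * (1 - 4 ^ n) / (2 * n)! := by
  rw [tanCoeff, pow_mul, neg_pow 4]
  norm_num
  ring

/-- For |θ| < π, tan(θ/2)/2 = (1/2) ∑_{n=1}^∞ c_n (θ/2)^{2n-1}. -/
theorem tan_half_series (θ : ℝ) (h : |θ| < Real.pi) :
    HasSum (fun n : ℕ => (1 / 2) * tanCoeff (n + 1) * (θ / 2) ^ (2 * (n + 1) - 1))
      (Real.tan (θ / 2) / 2) := by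
  have hθ : |θ / 2| < π / 2 := by rw [abs_div, abs_two]; linarith
  rw [show tan (θ / 2) / 2 = 1 / 2 * tan (θ / 2) by ring]
  refine ((hasSum_tan hθ).mul_left (1 / 2)).congr_fun fun n => ?_
  rw [tanCoeff_eq, show 2 * (n + 1) - 1 = 2 * n + 1 by omega]
  ring
end
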